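/- If ww is a square factor of the infinite Fibonacci word, then |w| = f_m for some m ≥ 0; conversely, for every m ≥ 0 there exists a square factor ww of the Fibonacci word with |w| = f_m. -/

import Mathlib

/-- Finite Fibonacci words: `fibF 0 = a`, `fibF 1 = ab`,
`fibF (m+2) = fibF (m+1) ++ fibF m`, with letters `a = false`, `b = true`.
Each `fibF m` is a prefix of the next, so a word is a factor of the infinite
Fibonacci word `𝔽` iff it is a factor (infix) of some `fibF m`. -/
def fibF : ℕ → List Bool
  | 0 => [false]
  | 1 => [false, true]
  | n + 2 => fibF (n + 1) ++ fibF n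

/-- A word is a factor of the infinite Fibonacci word. -/
def IsFactorF (w : List Bool) : Prop := ∃ m, w <:+: fibF m

/-- The prefix `𝔽[1,n]` of the infinite Fibonacci word of length `n`
(`fibF n` has length `fib (n+2) ≥ n`). -/
def fibPrefix (n : ℕ) : List Bool := (fibF n).take n

/-!
Every factor of `𝔽 = σ(𝔽)` is cut into the blocks `σ(a) = ab` and `σ(b) = a`, each of which
starts with `a`. A square `ww` whose root starts with `a` and which is followed by `a` is therefore
a whole number of blocks with a cut between the two copies of `w`, so `w = σ(v)` for a shorter
square `vv`. As `σ(fibF n) = fibF (n + 1)`, induction shows that `w` is abelian equivalent to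
(a permutation of) some `fibF n`, hence `|w| = f_n`. A square can be rotated into that position
unless it is flanked by `b` on both sides, and desubstituting that configuration twice leaves only
`w = a` and `w = aba`. Conversely `fibF (n + 4) = fibF (n + 2) fibF (n + 1) fibF (n + 1) fibF n`.
-/

open List

def fibMorphLetter : Bool → List Bool
  | false => [false, true]
  | true => [false]

/-- The morphism `σ`. -/
def fibMorph (l : List Bool) : List Bool := l.flatMap fibMorphLetter

@[simp] theorem fibMorph_nil : fibMorph [] = [] := rfl

@[simp] theorem fibMorph_cons (c : Bool) (l : List Bool) :
    fibMorph (c :: l) = fibMorphLetter c ++ fibMorph l := rfl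

@[simp] theorem fibMorph_append (l l' : List Bool) :
    fibMorph (l ++ l') = fibMorph l ++ fibMorph l' := flatMap_append

theorem fibMorph_fibF : ∀ n, fibMorph (fibF n) = fibF (n + 1)
  | 0 => rfl
  | 1 => rfl
  | n + 2 => by
    change fibMorph (fibF (n + 1) ++ fibF n) = fibF (n + 2) ++ fibF (n + 1)
    rw [fibMorph_append, fibMorph_fibF (n + 1), fibMorph_fibF n]

theorem head?_fibMorph_ne_true (l : List Bool) : (fibMorph l).head? ≠ some true := by
  rcases l with _ | ⟨_ | _, _⟩ <;> simp [fibMorphLetter]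

theorem fibMorph_injective : Function.Injective fibMorph := by
  intro x
  induction x with
  | nil => rintro (_ | ⟨_ | _, _⟩) h <;> simp_all [fibMorphLetter]
  | cons c x ih =>
    rintro (_ | ⟨d, y⟩) h
    · cases c <;> simp [fibMorphLetter] at h
    · cases c <;> cases d <;> simp only [fibMorph_cons, fibMorphLetter, cons_append, nil_append,
        cons.injEq, true_and] at h
      · rw [ih h]
      · exact absurd (congrArg head? h).symm (head?_fibMorph_ne_true y)
      · exact absurd (congrArg head? h) (head?_fibMorph_ne_true x)
      · rw [ih h]

theorem fibMorph_perm {l l' : List Bool} (h : l ~ l') : fibMorph l ~ fibMorph l' :=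
  h.flatMap_right _

theorem length_fibMorph (l : List Bool) : (fibMorph l).length = l.length + l.count false := by
  induction l with
  | nil => rfl
  | cons c l ih => cases c <;> simp [fibMorphLetter, ih] <;> omega

theorem fibMorph_eq_append {S u v : List Bool} (h : fibMorph S = u ++ v)
    (hv : v.head? ≠ some true) : ∃ U V, S = U ++ V ∧ fibMorph U = u ∧ fibMorph V = v := by
  induction S generalizing u with
  | nil =>
    obtain ⟨rfl, rfl⟩ := append_eq_nil_iff.mp h.symm
    exact ⟨[], [], rfl, rfl, rfl⟩
  | cons c S ih =>
    rcases u with _ | ⟨x, u⟩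
    · exact ⟨[], c :: S, rfl, rfl, h⟩
    cases c
    · rcases u with _ | ⟨y, u⟩
      · simp [fibMorphLetter] at h
        exact absurd (by rw [← h.2]; rfl) hv
      · simp only [fibMorph_cons, fibMorphLetter, cons_append, nil_append, cons.injEq] at h
        obtain ⟨rfl, rfl, h⟩ := h
        obtain ⟨U, V, rfl, rfl, hV⟩ := ih h
        exact ⟨false :: U, V, rfl, rfl, hV⟩
    · simp only [fibMorph_cons, fibMorphLetter, cons_append, nil_append, cons.injEq] at h
      obtain ⟨rfl, h⟩ := h
      obtain ⟨U, V, rfl, rfl, hV⟩ := ih h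
      exact ⟨true :: U, V, rfl, rfl, hV⟩

theorem isChain_fibMorph (l : List Bool) :
    (fibMorph l).IsChain (fun x y => x = true → y = false) := by
  induction l with
  | nil => exact .nil
  | cons c l ih =>
    refine isChain_append.mpr ⟨by cases c <;> simp [fibMorphLetter], ih, ?_⟩
    rintro _ - (_ | _) hy -
    · rfl
    · exact absurd hy (head?_fibMorph_ne_true l)

theorem fibF_length : ∀ n, (fibF n).length = Nat.fib (n + 2)
  | 0 => rfl
  | 1 => rfl
  | n + 2 => by
    change (fibF (n + 1) ++ fibF n).length = Nat.fib (n + 4)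
    rw [length_append, fibF_length (n + 1), fibF_length n, add_comm, ← Nat.fib_add_two]

theorem fibF_ne_nil (n : ℕ) : fibF n ≠ [] := by
  rw [← length_pos_iff, fibF_length]
  exact Nat.fib_pos.mpr (by omega)

theorem exists_fibF_succ_eq_append_cons (n : ℕ) : ∃ c z, fibF (n + 1) = fibF n ++ c :: z := by
  cases n with
  | zero => exact ⟨true, [], rfl⟩
  | succ n =>
    obtain ⟨c, z, h⟩ := exists_cons_of_ne_nil (fibF_ne_nil n)
    exact ⟨c, z, by rw [← h]; rfl⟩

namespace IsFactorF

variable {u v : List Bool}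

theorem of_infix (h : IsFactorF v) (huv : u <:+: v) : IsFactorF u :=
  let ⟨m, hm⟩ := h; ⟨m, huv.trans hm⟩

theorem map_fibMorph (h : IsFactorF u) : IsFactorF (fibMorph u) := by
  obtain ⟨m, s, t, hst⟩ := h
  exact ⟨m + 1, fibMorph s, fibMorph t, by rw [← fibMorph_fibF, ← hst]; simp⟩

theorem exists_infix_fibMorph_fibF (h : IsFactorF u) : ∃ m, u <:+: fibMorph (fibF m) := by
  obtain ⟨m, hm⟩ := h
  obtain ⟨c, z, hcz⟩ := exists_fibF_succ_eq_append_cons m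
  exact ⟨m, hm.trans ⟨[], c :: z, by rw [fibMorph_fibF, hcz]; rfl⟩⟩

theorem exists_append_singleton (h : IsFactorF u) : ∃ d, IsFactorF (u ++ [d]) := by
  obtain ⟨m, s, t, hst⟩ := h
  obtain ⟨c, z, hcz⟩ := exists_fibF_succ_eq_append_cons m
  obtain ⟨d, r, hdr⟩ :=
    exists_cons_of_ne_nil (append_ne_nil_of_right_ne_nil t (cons_ne_nil c z))
  exact ⟨d, m + 1, s, r, by rw [hcz, ← hst]; simp [hdr]⟩

theorem not_infix_bb (h : IsFactorF u) : ¬ [true, true] <:+: u := by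
  intro hbb
  obtain ⟨m, hm⟩ := h.exists_infix_fibMorph_fibF
  simpa using (isChain_fibMorph _).infix (hbb.trans hm)

theorem eq_false_of_infix {x : Bool} (h : IsFactorF u) (hx : [true, x] <:+: u) : x = false := by
  cases x
  · rfl
  · exact (h.not_infix_bb hx).elim

theorem exists_fibMorph_eq {t : List Bool} (h : IsFactorF (t ++ [false]))
    (ht : t.head? ≠ some true) : ∃ T, fibMorph T = t ∧ IsFactorF T := by
  obtain ⟨m, x, y, hxy⟩ := h.exists_infix_fibMorph_fibF
  obtain ⟨X, R, hXR, -, hR⟩ := fibMorph_eq_append (u := x) (v := t ++ false :: y)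
    (by rw [← hxy]; simp) (by cases t <;> simp_all)
  obtain ⟨T, Y, rfl, hT, -⟩ := fibMorph_eq_append hR (by simp)
  exact ⟨T, hT, m, X, Y, by rw [hXR, append_assoc]⟩

theorem of_fibMorph_append_false {T : List Bool} (h : IsFactorF (fibMorph T ++ [false])) :
    IsFactorF T := by
  obtain ⟨T', hT', hf⟩ := h.exists_fibMorph_eq (head?_fibMorph_ne_true T)
  rwa [← fibMorph_injective hT']

theorem not_infix_aaa (h : IsFactorF u) : ¬ [false, false, false] <:+: u := fun haaa =>
  ((h.of_infix haaa).of_fibMorph_append_false (T := [true, true])).not_infix_bb (infix_refl _)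

end IsFactorF

theorem isFactorF_cons_fibF (c : Bool) (n : ℕ) : IsFactorF (c :: fibF n) := by
  induction n generalizing c with
  | zero =>
    cases c
    · exact ⟨3, by decide⟩
    · exact ⟨2, by decide⟩
  | succ n ih =>
    cases c
    · simpa [fibMorphLetter, fibMorph_fibF] using (ih true).map_fibMorph
    · exact (ih false).map_fibMorph.of_infix
        ⟨[false], [], by simp [fibMorphLetter, fibMorph_fibF]⟩

theorem IsFactorF.exists_cons {u : List Bool} (h : IsFactorF u) : ∃ c, IsFactorF (c :: u) := by
  obtain ⟨m, s, t, hst⟩ := h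
  obtain _ | ⟨s', c, hs'⟩ := (false :: s).eq_nil_or_concat'
  · contradiction
  · refine ⟨c, (isFactorF_cons_fibF false m).of_infix ⟨s', t, ?_⟩⟩
    rw [← hst, append_cons s' c u, ← hs']
    rfl

theorem eq_nil_of_isFactorF_bvavb {v : List Bool}
    (h : IsFactorF (true :: v ++ false :: v ++ [true])) : v = [] := by
  rcases v with _ | ⟨x, v⟩
  · rfl
  exfalso
  cases x
  · rcases v.eq_nil_or_concat' with rfl | ⟨z, y, rfl⟩
    · exact h.not_infix_aaa ⟨[true], [true], rfl⟩
    cases y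
    · exact h.not_infix_aaa ⟨true :: false :: z, z ++ [false, true], by simp⟩
    · exact h.not_infix_bb ⟨true :: false :: z ++ [true, false, false] ++ z, [], by simp⟩
  · exact h.not_infix_bb ⟨[], _, rfl⟩

theorem eq_nil_or_eq_a_of_isFactorF_asbsa {s : List Bool}
    (h : IsFactorF (false :: s ++ true :: s ++ [false])) : s = [] ∨ s = [false] := by
  rcases s with _ | ⟨x, s⟩
  · exact .inl rfl
  right
  cases x
  swap
  · exact (h.not_infix_bb ⟨[false, true] ++ s, s ++ [false], by simp⟩).elim
  rcases s.eq_nil_or_concat' with rfl | ⟨z, y, rfl⟩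
  · rfl
  exfalso
  cases y
  swap
  · exact h.not_infix_bb ⟨[false, false] ++ z, false :: z ++ [true, false], by simp⟩
  obtain ⟨d, hd⟩ := h.exists_append_singleton
  cases d
  · exact hd.not_infix_aaa ⟨[false, false] ++ z ++ [false, true, false] ++ z, [], by simp⟩
  obtain ⟨e, he⟩ := hd.exists_append_singleton
  cases e
  swap
  · exact he.not_infix_bb
      ⟨[false, false] ++ z ++ [false, true, false] ++ z ++ [false, false], [], by simp⟩
  have haza : IsFactorF (false :: z ++ [false]) :=
    h.of_infix ⟨[false], true :: false :: z ++ [false, false], by simp⟩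
  obtain ⟨Z, hZ, -⟩ := haza.exists_fibMorph_eq (by simp)
  -- with `σ Z = a z`, the factor `a s b s a b a` is `σ (b Z a Z b a) a`
  have hbZaZb : IsFactorF (true :: Z ++ false :: Z ++ [true]) :=
    (IsFactorF.of_fibMorph_append_false (T := true :: Z ++ false :: Z ++ [true, false])
      (by simpa [fibMorphLetter, hZ] using he)).of_infix ⟨[], [false], by simp⟩
  simp [eq_nil_of_isFactorF_bvavb hbZaZb] at hZ

theorem eq_a_or_eq_aba_of_isFactorF_bwwb {w : List Bool}
    (h : IsFactorF (true :: w ++ w ++ [true])) : w = [false] ∨ w = [false, true, false] := by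
  rcases w with _ | ⟨x, w⟩
  · exact (h.not_infix_bb (infix_refl _)).elim
  cases x
  swap
  · exact (h.not_infix_bb ⟨[], _, rfl⟩).elim
  rcases w.eq_nil_or_concat' with rfl | ⟨z, y, rfl⟩
  · exact .inl rfl
  right
  cases y
  swap
  · exact (h.not_infix_bb ⟨true :: false :: z ++ [true, false] ++ z, [], by simp⟩).elim
  obtain ⟨c, hc⟩ := h.exists_cons
  cases c
  swap
  · exact (hc.not_infix_bb ⟨[], _, rfl⟩).elim
  obtain ⟨d, hd⟩ := hc.exists_append_singleton
  cases d
  swap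
  · exact (hd.not_infix_bb ⟨false :: true :: false :: z ++ [false, false] ++ z ++ [false], [],
      by simp⟩).elim
  have haza : IsFactorF (false :: z ++ [false]) :=
    h.of_infix ⟨[true], false :: z ++ [false, true], by simp⟩
  obtain ⟨Z, hZ, -⟩ := haza.exists_fibMorph_eq (by simp)
  -- with `σ Z = a z`, the factor `a b w w b a` is `σ (a Z b Z a) a`
  have haZbZa : IsFactorF (false :: Z ++ true :: Z ++ [false]) :=
    IsFactorF.of_fibMorph_append_false (by simpa [fibMorphLetter, hZ] using hd)
  rcases eq_nil_or_eq_a_of_isFactorF_asbsa haZbZa with rfl | rfl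
  · simp at hZ
  · simp only [fibMorph_cons, fibMorphLetter, fibMorph_nil, append_nil, cons.injEq, true_and] at hZ
    simp [← hZ]

theorem exists_fibMorph_eq_of_isFactorF_square {w : List Bool}
    (h : IsFactorF (false :: w ++ false :: w ++ [false])) :
    ∃ v, fibMorph v = false :: w ∧ IsFactorF (v ++ v) := by
  have hawa : IsFactorF (false :: w ++ [false]) := h.of_infix ⟨[], w ++ [false], by simp⟩
  obtain ⟨v, hv, -⟩ := hawa.exists_fibMorph_eq (by simp)
  exact ⟨v, hv, IsFactorF.of_fibMorph_append_false (by rwa [fibMorph_append, hv])⟩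

theorem false_mem_of_isFactorF_square {v : List Bool} (hv : v ≠ []) (h : IsFactorF (v ++ v)) :
    false ∈ v := by
  rcases v with _ | ⟨_ | _, _ | ⟨_ | _, v⟩⟩
  · contradiction
  all_goals first
    | exact (h.not_infix_bb (infix_refl _)).elim
    | exact (h.not_infix_bb ⟨[], _, rfl⟩).elim
    | simp

theorem length_lt_length_fibMorph {l : List Bool} (h : false ∈ l) :
    l.length < (fibMorph l).length := by
  rw [length_fibMorph]
  have := count_pos_iff.mpr h
  omega

theorem eq_a_or_eq_aba_or_exists_perm_of_isFactorF_square {w : List Bool} (hw : w ≠ [])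
    (h : IsFactorF (w ++ w)) :
    w = [false] ∨ w = [false, true, false] ∨
      ∃ u, false :: u ~ w ∧ IsFactorF (false :: u ++ false :: u ++ [false]) := by
  obtain ⟨c, hc⟩ := h.exists_cons
  obtain ⟨d, hcd⟩ := hc.exists_append_singleton
  obtain ⟨x, w', rfl⟩ := exists_cons_of_ne_nil hw
  obtain ⟨z, y, hzy⟩ : ∃ z y, x :: w' = z ++ [y] :=
    ((x :: w').eq_nil_or_concat').resolve_left (cons_ne_nil x w')
  have hcx : c = true → x = false := by
    rintro rfl; exact hc.eq_false_of_infix ⟨[], _, rfl⟩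
  have hyx : y = true → x = false := by
    rintro rfl
    have hyx : [true, x] <:+: z ++ [true] ++ x :: w' := ⟨z, w', by simp⟩
    rw [← hzy] at hyx
    exact h.eq_false_of_infix hyx
  have hyd : y = true → d = false := by
    rintro rfl
    have hyd : [true, d] <:+: c :: (x :: w' ++ (z ++ [true])) ++ [d] :=
      ⟨c :: x :: w' ++ z, [], by simp⟩
    rw [← hzy] at hyd
    exact hcd.eq_false_of_infix hyd
  -- in `c w w d`, rotate `w` right if `c = a` is its last letter, keep it if it starts with `a`
  -- and `d = a`; by the absence of `bb` the only other configuration is `c = d = b`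
  by_cases hbb : c = true ∧ d = true
  · obtain ⟨rfl, rfl⟩ := hbb
    exact (eq_a_or_eq_aba_of_isFactorF_bwwb hcd).imp_right .inl
  right; right
  by_cases hrot : c = false ∧ y = false
  · obtain ⟨rfl, rfl⟩ := hrot
    refine ⟨z, ?_, hcd.of_infix ⟨[], [d], ?_⟩⟩ <;> rw [hzy]
    · exact (perm_append_singleton _ _).symm
    · simp
  · obtain ⟨rfl, rfl⟩ : x = false ∧ d = false := by
      cases c <;> cases d <;> cases x <;> cases y <;> simp_all
    exact ⟨w', .refl _, hcd.of_infix ⟨[c], [], by simp⟩⟩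

theorem exists_perm_fibF_of_isFactorF_square {w : List Bool} (hw : w ≠ [])
    (h : IsFactorF (w ++ w)) : ∃ n, w ~ fibF n := by
  rcases eq_a_or_eq_aba_or_exists_perm_of_isFactorF_square hw h with
    rfl | rfl | ⟨u, hu, hsq⟩
  · exact ⟨0, .refl _⟩
  · exact ⟨2, .refl _⟩
  obtain ⟨v, hv, hvv⟩ := exists_fibMorph_eq_of_isFactorF_square hsq
  have hv0 : v ≠ [] := by rintro rfl; simp at hv
  have hlt : v.length < w.length := by
    rw [← hu.length_eq, ← hv]
    exact length_lt_length_fibMorph (false_mem_of_isFactorF_square hv0 hvv)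
  obtain ⟨n, hn⟩ := exists_perm_fibF_of_isFactorF_square hv0 hvv
  exact ⟨n + 1, hu.symm.trans (hv ▸ fibMorph_fibF n ▸ fibMorph_perm hn)⟩
termination_by w.length

theorem isFactorF_fibF_append_fibF : ∀ n, IsFactorF (fibF n ++ fibF n)
  | 0 => ⟨3, by decide⟩
  | n + 1 => ⟨n + 4, fibF (n + 2), fibF n, by simp [fibF]⟩

/-- The paper's `f_m` is `Nat.fib (m + 2)`. -/
theorem stmt_9 :
    (∀ w : List Bool, w ≠ [] → IsFactorF (w ++ w) →
      ∃ k : ℕ, w.length = Nat.fib (k + 2)) ∧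
    (∀ k : ℕ, ∃ w : List Bool, w ≠ [] ∧ w.length = Nat.fib (k + 2) ∧
      IsFactorF (w ++ w)) := by
  refine ⟨fun w hw h => ?_, fun k => ?_⟩
  · obtain ⟨n, hn⟩ := exists_perm_fibF_of_isFactorF_square hw h
    exact ⟨n, hn.length_eq.trans (fibF_length n)⟩
  · exact ⟨fibF k, fibF_ne_nil k, fibF_length k, isFactorF_fibF_append_fibF k⟩
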